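/- In a finite DAG where Y has no descendants, X is a parent of Y if and only if X and Y are not d-separated given pa(Y) \ {X}. -/

import Mathlib

namespace Paper

variable {V : Type*}

/-- Directed edge relation of a graph on vertex type `V`. -/
abbrev Edge (V : Type*) := V → V → Prop

/-- `v` is a descendant of `u`: reachable by a directed path of length ≥ 1. -/
def Desc (E : Edge V) (u v : V) : Prop := Relation.TransGen E u v

/-- The graph is acyclic: no directed cycles. -/
def Acyclic (E : Edge V) : Prop := ∀ v, ¬ Desc E v v

/-- `l` lists the internal vertices of a directed path from `u` to `v`. -/
def IsDirPath (E : Edge V) (u v : V) (l : List V) : Prop :=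
  List.Chain' E (u :: l ++ [v]) ∧ (u :: l ++ [v]).Nodup

/-- Undirected adjacency: an edge in either direction. -/
def Adj (E : Edge V) (u v : V) : Prop := E u v ∨ E v u

/-- `l` lists the internal vertices of a path (edges in either direction) from `u` to `v`. -/
def IsPath (E : Edge V) (u v : V) (l : List V) : Prop :=
  List.Chain' (Adj E) (u :: l ++ [v]) ∧ (u :: l ++ [v]).Nodup

/-- `w` is a collider on the path with full vertex list `p`:
both adjacent path edges point into `w`. -/
def IsColliderOn (E : Edge V) (p : List V) (w : V) : Prop :=
  ∃ a b, [a, w, b] <:+: p ∧ E a w ∧ E b w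

/-- The path from `u` to `v` with internal vertices `l` is blocked by `S`. -/
def Blocked (E : Edge V) (S : Set V) (u v : V) (l : List V) : Prop :=
  (∃ w ∈ l, ¬ IsColliderOn E (u :: l ++ [v]) w ∧ w ∈ S) ∨
  (∃ w ∈ l, IsColliderOn E (u :: l ++ [v]) w ∧ w ∉ S ∧ ∀ d, Desc E w d → d ∉ S)

/-- `u` and `v` are d-separated given `S`: every path between them is blocked. -/
def DSep (E : Edge V) (S : Set V) (u v : V) : Prop :=
  ∀ l, IsPath E u v l → Blocked E S u v l

/-- The set of parents of `y`. -/
def pa (E : Edge V) (y : V) : Set V := {u | E u y}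


/-!
A parent `X` of `Y` is joined to it by the one-edge path, which has no internal vertex that
could block it. Conversely, if `X` is not a parent then, `Y` having no children, `X` and `Y` are
not adjacent, so every path from `X` to `Y` has a last internal vertex `w`. Again because `Y` has
no children, `w` is a parent of `Y` other than `X`, and it is not a collider since its edge
to `Y` points away from it; so `w ∈ pa(Y) \ {X}` blocks the path.
-/

theorem _root_.List.Nodup.eq_of_pair_infix {α : Type*} {l : List α} (hl : l.Nodup) {a b c : α}
    (hb : [a, b] <:+: l) (hc : [a, c] <:+: l) : b = c := by
  induction l with
  | nil => simp at hb
  | cons x l ih =>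
    rw [List.nodup_cons] at hl
    rw [List.infix_cons_iff, List.cons_prefix_cons] at hb hc
    rcases hb with ⟨rfl, hb⟩ | hb <;> rcases hc with ⟨hac, hc⟩ | hc
    · obtain ⟨t, rfl⟩ := hb
      simpa [eq_comm] using hc
    · exact absurd (hc.subset (by simp)) hl.1
    · exact absurd (hb.subset (by simp)) (hac ▸ hl.1)
    · exact ih hl.2 hb hc

section

variable {E : Edge V} {S : Set V}

theorem not_isColliderOn_of_infix {p : List V} (hp : p.Nodup) {w y : V}
    (hwy : [w, y] <:+: p) (hyw : ¬ E y w) : ¬ IsColliderOn E p w := by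
  rintro ⟨a, b, hawb, -, hbw⟩
  have hyb : y = b := hp.eq_of_pair_infix hwy ((List.suffix_cons a [w, b]).isInfix.trans hawb)
  exact hyw (hyb ▸ hbw)

theorem not_dSep_of_adj {u v : V} (huv : u ≠ v) (h : Adj E u v) : ¬ DSep E S u v := by
  intro hd
  have hpath : IsPath E u v [] := ⟨List.isChain_pair.2 h, by simpa using huv⟩
  rcases hd [] hpath with ⟨w, hw, -⟩ | ⟨w, hw, -⟩ <;> simp at hw

theorem IsPath.exists_last_internal {u v : V} {l : List V} (hl : IsPath E u v l) (hne : l ≠ []) :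
    ∃ w ∈ l, w ≠ u ∧ w ≠ v ∧ Adj E w v ∧ [w, v] <:+: u :: l ++ [v] := by
  obtain ⟨l', w, rfl⟩ := (List.eq_nil_or_concat l).resolve_left hne
  rw [List.concat_eq_append] at hl ⊢
  obtain ⟨hchain, hnodup⟩ := hl
  have hwv : [w, v] <:+ u :: (l' ++ [w]) ++ [v] := List.suffix_iff_eq_append.2 (by simp)
  have hwv_nodup : [w, v].Nodup := hwv.nodup hnodup
  refine ⟨w, by simp, ?_, by simpa using hwv_nodup, ?_, hwv.isInfix⟩
  · rintro rfl
    simp at hnodup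
  · simpa using hchain.infix hwv.isInfix

theorem dSep_of_sink {X Y : V} (hY : ∀ v, v ≠ Y → ¬ E Y v) (hXY : ¬ E X Y)
    (hS : pa E Y \ {X} ⊆ S) : DSep E S X Y := by
  intro l hl
  rcases eq_or_ne l [] with rfl | hne
  · have hXY' : X ≠ Y := by simpa using hl.2
    exact absurd ((List.isChain_pair.1 hl.1).resolve_left hXY) (hY X hXY')
  obtain ⟨w, hw, hwX, hwY, hadj, hinfix⟩ := hl.exists_last_internal hne
  have hEwY : E w Y := hadj.resolve_right (hY w hwY)
  exact Or.inl ⟨w, hw, not_isColliderOn_of_infix hl.2 hinfix (hY w hwY), hS ⟨hEwY, hwX⟩⟩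

end

theorem stmt3_general (E : Edge V) (X Y : V)
    (hXY : X ≠ Y) (hY : ∀ v, v ≠ Y → ¬ Desc E Y v) :
    X ∈ pa E Y ↔ ¬ DSep E (pa E Y \ {X}) X Y := by
  have hsink : ∀ v, v ≠ Y → ¬ E Y v := fun v hv h => hY v hv (.single h)
  refine ⟨fun hpa => not_dSep_of_adj hXY (Or.inl hpa), fun hsep => ?_⟩
  by_contra hpa
  exact hsep (dSep_of_sink hsink hpa subset_rfl)

theorem stmt3 [Fintype V] (E : Edge V) (hacy : Acyclic E) (X Y : V)
    (hXY : X ≠ Y) (hY : ∀ v, v ≠ Y → ¬ Desc E Y v) :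
    X ∈ pa E Y ↔ ¬ DSep E (pa E Y \ {X}) X Y :=
  stmt3_general E X Y hXY hY

end Paper
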